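/- For the substitution σ defined below: for every pattern P ∈ patt(S_surf) and every C_σ-path γ of P from a cell with vector (x_0,y_0) to a cell with vector (x_1,y_1), the first coordinate of ω_σ(γ) equals −(y_1 − y_0). In particular, image vectors of horizontal steps have first coordinate 0 and image vectors of upward vertical steps have first coordinate −1. -/

import Mathlib

open scoped Classical

/-- A combinatorial substitution on alphabet `A` with vectors in `V`:
a base rule sending each letter to a pattern, together with a deterministic
finite set of concatenation rules.  `rule t t' u = some v` encodes the
concatenation rule `(t, t', u) ↦ v`. -/
structure Subst (A : Type*) (V : Type*) [AddCommGroup V] where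
  /-- the base rule -/
  base : A → Finset (V × A)
  /-- the image of a letter is a pattern: its cells have distinct vectors -/
  basePat : ∀ t : A, ∀ c ∈ base t, ∀ c' ∈ base t, c.1 = c'.1 → c = c'
  /-- the concatenation rules, as a partial function -/
  rule : A → A → V → Option V
  /-- there are finitely many concatenation rules -/
  finiteRules : {u : V | ∃ t t', rule t t' u ≠ none}.Finite
  /-- determinism: no two rules with left-hand sides `(t,t',u)` and `(t,t',-u)` -/
  det : ∀ t t' u, (rule t t' u).isSome → (rule t t' (-u)).isSome → u = -u

/-- A pattern is a finite set of cells with pairwise distinct vectors. -/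
def IsPattern {V A : Type*} (P : Finset (V × A)) : Prop :=
  ∀ c ∈ P, ∀ c' ∈ P, c.1 = c'.1 → c = c'

namespace Subst

variable {A V : Type*} [AddCommGroup V]

/-- `σ_rule(c, c')`: the relative position of the images of the two cells
`c`, `c'`, when some concatenation rule applies to them. -/
def ruleVec (σ : Subst A V) (c c' : V × A) : Option V :=
  match σ.rule c.2 c'.2 (c'.1 - c.1) with
  | some v => some v
  | none => (σ.rule c'.2 c.2 (c.1 - c'.1)).map (fun v => -v)

/-- The image vector `ω_σ(γ)` of a path `γ`. -/
def omega (σ : Subst A V) (γ : List (V × A)) : V :=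
  ((γ.zip γ.tail).map (fun p => (σ.ruleVec p.1 p.2).getD 0)).sum

/-- A `C_σ`-path: a nonempty sequence of cells in which any two consecutive
cells form a translated copy of a starting pattern of `σ`, and any two cells
with the same vector are equal. -/
def IsPath (σ : Subst A V) (γ : List (V × A)) : Prop :=
  γ ≠ [] ∧ γ.Chain' (fun c c' => (σ.ruleVec c c').isSome) ∧
    ∀ c ∈ γ, ∀ c' ∈ γ, c.1 = c'.1 → c = c'

/-- A `C_σ`-path of the pattern `P`. -/
def IsPathOf (σ : Subst A V) (P : Finset (V × A)) (γ : List (V × A)) : Prop :=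
  σ.IsPath γ ∧ ∀ c ∈ γ, c ∈ P

/-- A `C_σ`-loop of the pattern `P`. -/
def IsLoopOf (σ : Subst A V) (P : Finset (V × A)) (γ : List (V × A)) : Prop :=
  σ.IsPathOf P γ ∧ γ.head? = γ.getLast?

/-- `P` is `C_σ`-covered: any two of its cells are joined by a `C_σ`-path of `P`. -/
def Covered (σ : Subst A V) (P : Finset (V × A)) : Prop :=
  ∀ c ∈ P, ∀ c' ∈ P,
    ∃ γ, σ.IsPathOf P γ ∧ γ.head? = some c ∧ γ.getLast? = some c'

/-- `σ` is consistent on `P`: any two `C_σ`-paths of `P` with the same first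
and last cells have the same image vector. -/
def ConsistentOn (σ : Subst A V) (P : Finset (V × A)) : Prop :=
  ∀ γ γ' : List (V × A), σ.IsPathOf P γ → σ.IsPathOf P γ' →
    γ.head? = γ'.head? → γ.getLast? = γ'.getLast? → σ.omega γ = σ.omega γ'

/-- `σ` is consistent: it is consistent on every `C_σ`-covered pattern. -/
def Consistent (σ : Subst A V) : Prop :=
  ∀ P : Finset (V × A), IsPattern P → σ.Covered P → σ.ConsistentOn P

/-- The support of the image of a letter. -/
noncomputable def supp (σ : Subst A V) (t : A) : Finset V :=
  (σ.base t).image Prod.fst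

/-- `σ` is non-overlapping on `P`: the images of two distinct cells of `P`
joined by a `C_σ`-path of `P` have disjoint supports. -/
def NonOverlappingOn (σ : Subst A V) (P : Finset (V × A)) : Prop :=
  ∀ c ∈ P, ∀ c' ∈ P, c ≠ c' → ∀ γ, σ.IsPathOf P γ →
    γ.head? = some c → γ.getLast? = some c' →
    ∀ b ∈ σ.supp c'.2, σ.omega γ + b ∉ σ.supp c.2

/-- `σ` is non-overlapping: it is non-overlapping on every `C_σ`-covered pattern. -/
def NonOverlapping (σ : Subst A V) : Prop :=
  ∀ P : Finset (V × A), IsPattern P → σ.Covered P → σ.NonOverlappingOn P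

end Subst

/-- The three-letter alphabet `{1, 2, 3}`. -/
inductive L : Type where
  | l1 : L
  | l2 : L
  | l3 : L
deriving DecidableEq

instance : Fintype L :=
  ⟨{L.l1, L.l2, L.l3}, fun x => by cases x <;> simp⟩

open L

/-- The horizontal concatenation rules `(t, t', (1,0)) ↦ v`. -/
def hruleS : L → L → Option (ℤ × ℤ)
  | l1, l1 => some (0, 2)
  | l1, l2 => some (0, 2)
  | l1, l3 => some (0, 2)
  | l2, l1 => some (0, 1)
  | l2, l2 => some (0, 1)
  | l2, l3 => none
  | l3, l1 => some (0, 1)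
  | l3, l2 => some (0, 1)
  | l3, l3 => some (0, 1)

/-- The vertical concatenation rules `(t, t', (0,1)) ↦ v`. -/
def vruleS : L → L → Option (ℤ × ℤ)
  | l1, l1 => some (-1, -1)
  | l1, l2 => some (-1, 0)
  | l1, l3 => some (-1, 0)
  | l2, l1 => some (-1, -1)
  | l2, l2 => some (-1, 0)
  | l2, l3 => some (-1, 0)
  | l3, l1 => none
  | l3, l2 => some (-1, -1)
  | l3, l3 => some (-1, -1)

/-- The substitution of Example `mini`, coming from the theory of stepped
surfaces:
`1 ↦ {[(0,0),2], [(0,1),1]}`, `2 ↦ {[(0,0),3]}`, `3 ↦ {[(0,0),1]}`,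
with the sixteen concatenation rules `hruleS` and `vruleS`. -/
noncomputable def sigmaS : Subst L (ℤ × ℤ) where
  base t :=
    match t with
    | l1 => {((0, 0), l2), ((0, 1), l1)}
    | l2 => {((0, 0), l3)}
    | l3 => {((0, 0), l1)}
  basePat := by intro t; cases t <;> decide
  rule t t' u :=
    if u = ((1 : ℤ), (0 : ℤ)) then hruleS t t'
    else if u = ((0 : ℤ), (1 : ℤ)) then vruleS t t' else none
  finiteRules := by
    apply Set.Finite.subset
      ((Set.finite_singleton (((0 : ℤ), (1 : ℤ)) : ℤ × ℤ)).insert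
        (((1 : ℤ), (0 : ℤ)) : ℤ × ℤ))
    rintro u ⟨t, t', h⟩
    try simp only at h
    split_ifs at h with h1 h2
    · exact Set.mem_insert_iff.2 (Or.inl h1)
    · exact Set.mem_insert_iff.2 (Or.inr h2)
    · exact absurd rfl h
  det := by
    intro t t' u h1 h2
    exfalso
    try simp only at h1 h2
    have hu : u = ((1 : ℤ), (0 : ℤ)) ∨ u = ((0 : ℤ), (1 : ℤ)) := by
      split_ifs at h1 with hA hB
      · exact Or.inl hA
      · exact Or.inr hB
      · simp at h1
    have hnu : -u = ((1 : ℤ), (0 : ℤ)) ∨ -u = ((0 : ℤ), (1 : ℤ)) := by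
      split_ifs at h2 with hC hD
      · exact Or.inl hC
      · exact Or.inr hD
      · simp at h2
    rcases hu with rfl | rfl <;> rcases hnu with h | h <;> revert h <;> decide

/-- The 28 allowed `2 × 2` patterns, written
(bottom-left, bottom-right, top-left, top-right). -/
def allowedSurf : List (L × L × L × L) :=
  [(l1, l1, l1, l1), (l1, l1, l2, l1), (l1, l1, l3, l1),
   (l1, l2, l1, l1), (l1, l2, l2, l1), (l1, l2, l3, l1),
   (l1, l3, l1, l2), (l1, l3, l1, l3), (l1, l3, l2, l2),
   (l1, l3, l3, l2), (l1, l3, l3, l3),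
   (l2, l1, l1, l2), (l2, l1, l1, l3), (l2, l1, l2, l2),
   (l2, l1, l3, l2), (l2, l1, l3, l3),
   (l2, l2, l1, l2), (l2, l2, l1, l3), (l2, l2, l2, l2),
   (l2, l2, l3, l2), (l2, l2, l3, l3),
   (l3, l1, l2, l1), (l3, l1, l3, l1),
   (l3, l2, l2, l1), (l3, l2, l3, l1),
   (l3, l3, l2, l2), (l3, l3, l3, l2), (l3, l3, l3, l3)]

/-- The set of configurations whose `2 × 2` sub-patterns are all allowed:
codings of stepped surfaces. -/
def Ssurf : Set ((ℤ × ℤ) → L) :=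
  {x | ∀ v : ℤ × ℤ, (x v, x (v + (1, 0)), x (v + (0, 1)), x (v + (1, 1))) ∈ allowedSurf}

/-- The pattern `P` appears in the configuration `x` (up to a translation). -/
def AppearsIn (x : (ℤ × ℤ) → L) (P : Finset ((ℤ × ℤ) × L)) : Prop :=
  ∃ w : ℤ × ℤ, ∀ c ∈ P, x (c.1 + w) = c.2

/-- The pattern `P` appears in some configuration of `S`. -/
def AppearsInSys (S : Set ((ℤ × ℤ) → L)) (P : Finset ((ℤ × ℤ) × L)) : Prop :=
  ∃ x ∈ S, AppearsIn x P

/-! Every concatenation rule `(t, t', u) ↦ v` of `σ` satisfies `v₁ = -u₂`. Both sides of this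
relation are additive and the rules are antisymmetric under swapping the two cells, so along any
path the image vector `ω_σ(γ)` telescopes: its first coordinate is minus the total vertical
displacement of `γ`. -/

namespace Subst

variable {A V G : Type*} [AddCommGroup V] [AddCommGroup G]

theorem omega_cons_cons (σ : Subst A V) (c c' : V × A) (γ : List (V × A)) :
    σ.omega (c :: c' :: γ) = (σ.ruleVec c c').getD 0 + σ.omega (c' :: γ) := by
  simp [omega]

theorem map_ruleVec_getD {σ : Subst A V} (φ ψ : V →+ G)
    (hrule : ∀ t t' u v, σ.rule t t' u = some v → φ v = ψ u)
    {c c' : V × A} (h : (σ.ruleVec c c').isSome) :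
    φ ((σ.ruleVec c c').getD 0) = ψ (c'.1 - c.1) := by
  unfold ruleVec at h ⊢
  rcases hr : σ.rule c.2 c'.2 (c'.1 - c.1) with _ | v
  · rcases hr' : σ.rule c'.2 c.2 (c.1 - c'.1) with _ | w
    · simp [hr, hr'] at h
    · simp only [Option.map_some, Option.getD_some]
      rw [map_neg, hrule _ _ _ _ hr', map_sub, map_sub, neg_sub]
  · simp [hrule _ _ _ _ hr]

theorem map_omega_of_isChain {σ : Subst A V} (φ ψ : V →+ G)
    (hrule : ∀ t t' u v, σ.rule t t' u = some v → φ v = ψ u) :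
    ∀ {γ : List (V × A)} {c₀ c₁ : V × A}, γ.IsChain (fun c c' => (σ.ruleVec c c').isSome) →
      γ.head? = some c₀ → γ.getLast? = some c₁ → φ (σ.omega γ) = ψ (c₁.1 - c₀.1)
  | [], _, _, _, h₀, _ => by cases h₀
  | [c], _, _, _, h₀, h₁ => by
    obtain rfl : c = _ := Option.some.inj h₀
    obtain rfl : c = _ := Option.some.inj h₁
    simp [omega]
  | c :: c' :: γ, _, c₁, hγ, h₀, h₁ => by
    obtain rfl : c = _ := Option.some.inj h₀
    rw [List.isChain_cons_cons] at hγ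
    rw [List.getLast?_cons_cons] at h₁
    rw [omega_cons_cons, map_add, map_ruleVec_getD φ ψ hrule hγ.1,
      map_omega_of_isChain φ ψ hrule hγ.2 rfl h₁, ← map_add, sub_add_sub_cancel']

end Subst

theorem sigmaS_rule_fst {t t' : L} {u v : ℤ × ℤ} (h : sigmaS.rule t t' u = some v) :
    v.1 = -u.2 := by
  change (if u = (1, 0) then hruleS t t' else if u = (0, 1) then vruleS t t' else none) = some v
    at h
  split_ifs at h <;> subst_vars <;> cases t <;> cases t' <;>
    simp only [hruleS, vruleS, Option.some.injEq, reduceCtorEq] at h <;> simp [← h]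

/-- For the stepped-surface substitution `σ`: for every
pattern `P ∈ patt(S_surf)` and every `C_σ`-path `γ` of `P` from a cell with
vector `(x₀, y₀)` to a cell with vector `(x₁, y₁)`, the first coordinate of
`ω_σ(γ)` equals `-(y₁ - y₀)`.  In particular image vectors of horizontal
steps have first coordinate `0`, and image vectors of upward vertical steps
have first coordinate `-1`. -/
theorem sigmaS_omega_first_coordinate :
    (∀ P : Finset ((ℤ × ℤ) × L), IsPattern P → AppearsInSys Ssurf P →
      ∀ (γ : List ((ℤ × ℤ) × L)) (v₀ v₁ : ℤ × ℤ) (t₀ t₁ : L),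
        sigmaS.IsPathOf P γ → γ.head? = some (v₀, t₀) →
        γ.getLast? = some (v₁, t₁) →
        (sigmaS.omega γ).1 = -(v₁.2 - v₀.2)) ∧
    (∀ (t t' : L) (v : ℤ × ℤ),
      sigmaS.rule t t' (((1 : ℤ), (0 : ℤ)) : ℤ × ℤ) = some v → v.1 = 0) ∧
    (∀ (t t' : L) (v : ℤ × ℤ),
      sigmaS.rule t t' (((0 : ℤ), (1 : ℤ)) : ℤ × ℤ) = some v → v.1 = -1) := by
  refine ⟨?_, fun _ _ _ h => by simpa using sigmaS_rule_fst h,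
    fun _ _ _ h => sigmaS_rule_fst h⟩
  intro _ _ _ γ v₀ v₁ t₀ t₁ hγ h₀ h₁
  exact Subst.map_omega_of_isChain (AddMonoidHom.fst ℤ ℤ) (-AddMonoidHom.snd ℤ ℤ)
    (fun _ _ _ _ h => sigmaS_rule_fst h) hγ.1.2.1 h₀ h₁
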